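/- Let u₁, u₂ be two ensembles of J vectors in ℝ^M, each contained in B_R(u*), and let 𝒢 : ℝ^M → ℝ^L be Lipschitz with constant C_𝒢. Then ‖C^{pp}(u₁) − C^{pp}(u₂)‖₂ ≤ 4(J+1) M C_𝒢 · (1/J) Σ_j ‖u₁^(j) − u₂^(j)‖₂, where M = C_𝒢 R + ‖𝒢(u*)‖₂. -/

import Mathlib

/-!
Write `a_j = 𝒢(u₁ʲ) - 𝒢̄₁` and `b_j = 𝒢(u₂ʲ) - 𝒢̄₂`. Then `C^{pp}(u₁) - C^{pp}(u₂)` is the average of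
`a_j a_jᵀ - b_j b_jᵀ = a_j (a_j - b_j)ᵀ + (a_j - b_j) b_jᵀ`, and a rank-one matrix `x yᵀ` has
spectral norm `‖x‖ ‖y‖`. All images lie in the ball of radius `K = C_𝒢 R + ‖𝒢(u*)‖`, so
`‖a_j‖, ‖b_j‖ ≤ 2K`, while `‖a_j - b_j‖` is at most `‖𝒢(u₁ʲ) - 𝒢(u₂ʲ)‖` plus the average of these
differences. Averaging gives the bound with constant `8 K C_𝒢 ≤ 4 (J + 1) K C_𝒢`.
-/

open Finset Matrix
open scoped Matrix.Norms.L2Operator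

section Lipschitz

variable {E F : Type*} [SeminormedAddCommGroup F] {C : ℝ}

theorem nonneg_of_norm_sub_le_mul [NormedAddCommGroup E] [Nontrivial E] {G : E → F}
    (hG : ∀ x y, ‖G x - G y‖ ≤ C * ‖x - y‖) : 0 ≤ C := by
  obtain ⟨x, y, hxy⟩ := exists_pair_ne E
  exact nonneg_of_mul_nonneg_left ((norm_nonneg _).trans (hG x y))
    (norm_pos_iff.mpr (sub_ne_zero.mpr hxy))

theorem norm_le_of_norm_sub_le_mul [SeminormedAddCommGroup E] {G : E → F}
    (hG : ∀ x y, ‖G x - G y‖ ≤ C * ‖x - y‖) (hC : 0 ≤ C) {x x₀ : E} {R : ℝ} (hx : ‖x - x₀‖ ≤ R) : ‖G x‖ ≤ C * R + ‖G x₀‖ :=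
  calc ‖G x‖ ≤ ‖G x - G x₀‖ + ‖G x₀‖ := norm_le_norm_sub_add _ _
    _ ≤ C * R + ‖G x₀‖ := by grw [hG, hx]

end Lipschitz

theorem Matrix.l2_opNorm_vecMulVec {𝕜 m n : Type*} [RCLike 𝕜] [Fintype m] [Fintype n]
    [DecidableEq n] (x : EuclideanSpace 𝕜 m) (y : EuclideanSpace 𝕜 n) :
    ‖vecMulVec x (star y)‖ = ‖x‖ * ‖y‖ := by
  rw [← InnerProductSpace.symm_toEuclideanLin_rankOne, l2_opNorm_def, LinearEquiv.trans_apply,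
    LinearEquiv.apply_symm_apply, ← LinearMap.coe_toContinuousLinearMap_symm,
    LinearEquiv.apply_symm_apply, InnerProductSpace.norm_rankOne]

theorem Matrix.l2_opNorm_vecMulVec_self_sub_le {n : Type*} [Fintype n] [DecidableEq n]
    (a b : EuclideanSpace ℝ n) :
    ‖vecMulVec a a - vecMulVec b b‖ ≤ (‖a‖ + ‖b‖) * ‖a - b‖ := by
  have hsplit : vecMulVec a a - vecMulVec b b = vecMulVec a (a - b) + vecMulVec (a - b) b := by
    rw [WithLp.ofLp_sub, vecMulVec_sub, sub_vecMulVec]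
    abel
  calc ‖vecMulVec a a - vecMulVec b b‖
      ≤ ‖vecMulVec a (star (a - b))‖ + ‖vecMulVec (a - b) (star b)‖ := by
        simpa only [hsplit, star_trivial] using norm_add_le _ _
    _ = (‖a‖ + ‖b‖) * ‖a - b‖ := by
        rw [l2_opNorm_vecMulVec, l2_opNorm_vecMulVec]
        ring

section EnsembleMean

variable {ι E : Type*} [Fintype ι]

noncomputable def ensembleMean [AddCommMonoid E] [Module ℝ E] (x : ι → E) : E :=
  (Fintype.card ι : ℝ)⁻¹ • ∑ j, x j

theorem ensembleMean_add [AddCommMonoid E] [Module ℝ E] (x y : ι → E) :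
    ensembleMean (x + y) = ensembleMean x + ensembleMean y := by
  simp only [ensembleMean, Pi.add_apply, sum_add_distrib, smul_add]

theorem ensembleMean_sub [AddCommGroup E] [Module ℝ E] (x y : ι → E) :
    ensembleMean (x - y) = ensembleMean x - ensembleMean y := by
  simp only [ensembleMean, Pi.sub_apply, sum_sub_distrib, smul_sub]

theorem ensembleMean_smul [AddCommMonoid E] [Module ℝ E] (c : ℝ) (x : ι → E) :
    ensembleMean (c • x) = c • ensembleMean x := by
  simp only [ensembleMean, Pi.smul_apply, ← smul_sum, smul_comm c]

theorem ensembleMean_const [Nonempty ι] [AddCommMonoid E] [Module ℝ E] (c : E) :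
    ensembleMean (fun _ : ι ↦ c) = c := by
  have hcard : (Fintype.card ι : ℝ) ≠ 0 := Nat.cast_ne_zero.mpr Fintype.card_ne_zero
  rw [ensembleMean, sum_const, card_univ, ← Nat.cast_smul_eq_nsmul ℝ, smul_smul,
    inv_mul_cancel₀ hcard, one_smul]

theorem ensembleMean_mono {f g : ι → ℝ} (hfg : ∀ j, f j ≤ g j) :
    ensembleMean f ≤ ensembleMean g :=
  smul_le_smul_of_nonneg_left (sum_le_sum fun j _ ↦ hfg j) (by positivity)

theorem ensembleMean_nonneg {f : ι → ℝ} (hf : ∀ j, 0 ≤ f j) : 0 ≤ ensembleMean f :=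
  smul_nonneg (by positivity) (sum_nonneg fun j _ ↦ hf j)

variable [SeminormedAddCommGroup E] [NormedSpace ℝ E]

theorem norm_ensembleMean_le (x : ι → E) : ‖ensembleMean x‖ ≤ ensembleMean (‖x ·‖) := by
  rw [ensembleMean, ensembleMean, norm_smul, Real.norm_of_nonneg (by positivity), smul_eq_mul]
  gcongr
  exact norm_sum_le _ _

theorem norm_ensembleMean_le_of_forall_le [Nonempty ι] {x : ι → E} {K : ℝ}
    (hx : ∀ j, ‖x j‖ ≤ K) : ‖ensembleMean x‖ ≤ K :=
  (norm_ensembleMean_le x).trans ((ensembleMean_mono hx).trans_eq (ensembleMean_const K))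

theorem norm_sub_ensembleMean_le [Nonempty ι] {x : ι → E} {K : ℝ} (hx : ∀ j, ‖x j‖ ≤ K)
    (j : ι) : ‖x j - ensembleMean x‖ ≤ 2 * K := by
  linarith [norm_sub_le (x j) (ensembleMean x), hx j, norm_ensembleMean_le_of_forall_le hx]

theorem ensembleMean_norm_sub_ensembleMean_le [Nonempty ι] (x : ι → E) :
    ensembleMean (fun j ↦ ‖x j - ensembleMean x‖) ≤ 2 * ensembleMean (‖x ·‖) := by
  calc ensembleMean (fun j ↦ ‖x j - ensembleMean x‖)
      ≤ ensembleMean ((‖x ·‖) + fun _ ↦ ensembleMean (‖x ·‖)) :=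
        ensembleMean_mono fun j ↦ (norm_sub_le _ _).trans (by
          simpa only [Pi.add_apply] using add_le_add_right (norm_ensembleMean_le x) _)
    _ = 2 * ensembleMean (‖x ·‖) := by
        rw [ensembleMean_add, ensembleMean_const]
        ring

end EnsembleMean

section EnsembleCov

variable {ι n : Type*} [Fintype ι] [Fintype n] [DecidableEq n]

noncomputable def ensembleCov (x : ι → EuclideanSpace ℝ n) : Matrix n n ℝ :=
  ensembleMean fun j ↦ let a : EuclideanSpace ℝ n := x j - ensembleMean x; vecMulVec a a

theorem norm_ensembleCov_sub_le [Nonempty ι] {x y : ι → EuclideanSpace ℝ n} {K : ℝ}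
    (hx : ∀ j, ‖x j‖ ≤ K) (hy : ∀ j, ‖y j‖ ≤ K) :
    ‖ensembleCov x - ensembleCov y‖ ≤ 8 * K * ensembleMean (fun j ↦ ‖x j - y j‖) := by
  have hK : 0 ≤ K := (norm_nonneg _).trans (hx (Classical.arbitrary ι))
  have hcentered : ∀ j, (x j - ensembleMean x) - (y j - ensembleMean y) =
      (x - y) j - ensembleMean (x - y) := fun j ↦ by
    rw [ensembleMean_sub, Pi.sub_apply]
    abel
  calc ‖ensembleCov x - ensembleCov y‖
      ≤ ensembleMean (fun j ↦ 4 * K * ‖(x - y) j - ensembleMean (x - y)‖) := by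
        rw [ensembleCov, ensembleCov, ← ensembleMean_sub]
        refine (norm_ensembleMean_le _).trans (ensembleMean_mono fun j ↦ ?_)
        refine (l2_opNorm_vecMulVec_self_sub_le _ _).trans ?_
        rw [hcentered]
        gcongr
        linarith [norm_sub_ensembleMean_le hx j, norm_sub_ensembleMean_le hy j]
    _ = 4 * K * ensembleMean (fun j ↦ ‖(x - y) j - ensembleMean (x - y)‖) :=
        ensembleMean_smul (4 * K) _
    _ ≤ 8 * K * ensembleMean (fun j ↦ ‖x j - y j‖) := by
        have := mul_le_mul_of_nonneg_left (ensembleMean_norm_sub_ensembleMean_le (x - y))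
          (by positivity : 0 ≤ 4 * K)
        simp only [Pi.sub_apply] at this ⊢
        linarith

theorem norm_ensembleCov_comp_sub_le [Nonempty ι] {E : Type*} [SeminormedAddCommGroup E]
    {G : E → EuclideanSpace ℝ n} {CG K : ℝ} (hG : ∀ x y, ‖G x - G y‖ ≤ CG * ‖x - y‖)
    {u₁ u₂ : ι → E} (hu₁ : ∀ j, ‖G (u₁ j)‖ ≤ K) (hu₂ : ∀ j, ‖G (u₂ j)‖ ≤ K) :
    ‖ensembleCov (G ∘ u₁) - ensembleCov (G ∘ u₂)‖ ≤
      8 * K * CG * ensembleMean (fun j ↦ ‖u₁ j - u₂ j‖) := by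
  have hK : 0 ≤ K := (norm_nonneg _).trans (hu₁ (Classical.arbitrary ι))
  calc ‖ensembleCov (G ∘ u₁) - ensembleCov (G ∘ u₂)‖
      ≤ 8 * K * ensembleMean (fun j ↦ ‖G (u₁ j) - G (u₂ j)‖) := norm_ensembleCov_sub_le hu₁ hu₂
    _ ≤ 8 * K * ensembleMean (CG • fun j ↦ ‖u₁ j - u₂ j‖) := by
        gcongr
        exact ensembleMean_mono fun j ↦ hG _ _
    _ = 8 * K * CG * ensembleMean (fun j ↦ ‖u₁ j - u₂ j‖) := by
        rw [ensembleMean_smul, smul_eq_mul]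
        ring

end EnsembleCov

theorem covariance_pp_lipschitz {J M L : ℕ} (hJ : 0 < J)
    (u₁ u₂ : Fin J → EuclideanSpace ℝ (Fin M))
    (G : EuclideanSpace ℝ (Fin M) → EuclideanSpace ℝ (Fin L))
    (ustar : EuclideanSpace ℝ (Fin M)) (R CG : ℝ)
    (hR₁ : ∀ j, ‖u₁ j - ustar‖ ≤ R) (hR₂ : ∀ j, ‖u₂ j - ustar‖ ≤ R)
    (hG : ∀ x y, ‖G x - G y‖ ≤ CG * ‖x - y‖) :
    let Cpp : (Fin J → EuclideanSpace ℝ (Fin M)) → Matrix (Fin L) (Fin L) ℝ :=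
      fun u => Matrix.of fun i k => (J : ℝ)⁻¹ *
        ∑ j, (G (u j) i - ((J : ℝ)⁻¹ • ∑ j', G (u j')) i) *
          (G (u j) k - ((J : ℝ)⁻¹ • ∑ j', G (u j')) k)
    ‖Cpp u₁ - Cpp u₂‖ ≤
      4 * ((J : ℝ) + 1) * (CG * R + ‖G ustar‖) * CG *
        ((J : ℝ)⁻¹ * ∑ j, ‖u₁ j - u₂ j‖) := by
  intro Cpp
  have hCpp : ∀ u, Cpp u = ensembleCov (G ∘ u) := fun u ↦ by
    ext i k
    simp [Cpp, ensembleCov, ensembleMean, vecMulVec_apply, Matrix.sum_apply, mul_sum]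
  rcases subsingleton_or_nontrivial (EuclideanSpace ℝ (Fin M)) with hM | hM
  · -- for `M = 0` the constant `CG` may be negative, but then `u₁ = u₂`
    simp [Subsingleton.elim u₁ u₂]
  have : Nonempty (Fin J) := ⟨⟨0, hJ⟩⟩
  have hCG : 0 ≤ CG := nonneg_of_norm_sub_le_mul hG
  have hbound : ∀ x, ‖x - ustar‖ ≤ R → ‖G x‖ ≤ CG * R + ‖G ustar‖ :=
    fun x hx ↦ norm_le_of_norm_sub_le_mul hG hCG hx
  have hmean : ensembleMean (fun j ↦ ‖u₁ j - u₂ j‖) = (J : ℝ)⁻¹ * ∑ j, ‖u₁ j - u₂ j‖ := by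
    rw [ensembleMean, Fintype.card_fin, smul_eq_mul]
  have hK : 0 ≤ CG * R + ‖G ustar‖ := (norm_nonneg _).trans (hbound _ (hR₁ ⟨0, hJ⟩))
  have hJ₁ : (1 : ℝ) ≤ J := Nat.one_le_cast.mpr hJ
  rw [hCpp, hCpp, ← hmean]
  calc _ ≤ 8 * (CG * R + ‖G ustar‖) * CG * ensembleMean (fun j ↦ ‖u₁ j - u₂ j‖) :=
        norm_ensembleCov_comp_sub_le hG (fun j ↦ hbound _ (hR₁ j)) (fun j ↦ hbound _ (hR₂ j))
    _ ≤ _ := by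
        have := ensembleMean_nonneg fun j ↦ norm_nonneg (u₁ j - u₂ j)
        gcongr
        linarith
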